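/- Let δ be a derivation on a ring R. The extensions of δ to the maximal right ring of quotients Q_max(R) and to the right ring of quotients Q_Gold(R) with respect to the Goldie torsion theory agree. Moreover, the extension of δ to the right ring of quotients with respect to any hereditary and faithful torsion theory agrees with the extension of δ to Q_Gold(R). -/
import Mathlib


open MulOpposite

/-- A derivation on a ring `S`: an additive map satisfying the Leibniz rule
`δ (a * b) = δ a * b + a * δ b`. -/
def IsDerivation {S : Type*} [Ring S] (δ : S → S) : Prop :=
  (∀ a b : S, δ (a + b) = δ a + δ b) ∧ (∀ a b : S, δ (a * b) = δ a * b + a * δ b)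

/-- A Gabriel filter of left ideals of a ring `S`.  Taking `S = Rᵐᵒᵖ`, this encodes a
Gabriel filter of right ideals of `R` (a right ideal of `R` is a left ideal of `Rᵐᵒᵖ`). -/
structure GabrielFilter (S : Type*) [Ring S] where
  sets : Set (Ideal S)
  top_mem : ⊤ ∈ sets
  mono : ∀ ⦃I J : Ideal S⦄, I ∈ sets → I ≤ J → J ∈ sets
  inf_mem : ∀ ⦃I J : Ideal S⦄, I ∈ sets → J ∈ sets → I ⊓ J ∈ sets
  quot_mem : ∀ ⦃I : Ideal S⦄, I ∈ sets → ∀ s : S,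
    Submodule.comap (LinearMap.toSpanSingleton S S s) I ∈ sets
  trans : ∀ ⦃I J : Ideal S⦄, J ∈ sets →
    (∀ s ∈ J, Submodule.comap (LinearMap.toSpanSingleton S S s) I ∈ sets) → I ∈ sets

/-- A Gabriel filter of right ideals of `R`, encoded as a Gabriel filter of left ideals
of `Rᵐᵒᵖ`. -/
abbrev RightGabrielFilter (R : Type*) [Ring R] := GabrielFilter Rᵐᵒᵖ

/-- The torsion set of a module for the hereditary torsion theory corresponding to a
(Gabriel) filter `𝔉` of ideals: the elements whose annihilator ideal belongs to `𝔉`. -/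
def torsionSet {S : Type*} [Ring S] (𝔉 : Set (Ideal S)) (M : Type*) [AddCommGroup M]
    [Module S M] : Set M :=
  {x : M | LinearMap.ker (LinearMap.toSpanSingleton S M x) ∈ 𝔉}

/-- `q : M → Q` realizes `Q` as the module of quotients of `M` with respect to the filter
`𝔉`: the kernel of `q` is the torsion submodule of `M`, `Q` is torsion free, the cokernel
of `q` is torsion, and `Q` is `𝔉`-injective (closed). -/
structure IsModuleOfQuotients {S : Type*} [Ring S] (𝔉 : Set (Ideal S)) {M Q : Type*}
    [AddCommGroup M] [Module S M] [AddCommGroup Q] [Module S Q] (q : M →ₗ[S] Q) : Prop where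
  ker_eq : (LinearMap.ker q : Set M) = torsionSet 𝔉 M
  torsionFree : torsionSet 𝔉 Q = {0}
  coker_torsion : ∀ y : Q,
    Submodule.comap (LinearMap.toSpanSingleton S Q y) (LinearMap.range q) ∈ 𝔉
  closed : ∀ I ∈ 𝔉, ∀ f : ↥I →ₗ[S] Q, ∃ g : S →ₗ[S] Q, ∀ x : ↥I, g ↑x = f x

/-- `d` is a `δ`-derivation on the right `R`-module `M` (encoded as a left `Rᵐᵒᵖ`-module):
`d` is additive and `d (x·r) = (d x)·r + x·(δ r)`. -/
def IsRightModuleDerivation {R : Type*} [Ring R] (δ : R → R) {M : Type*} [AddCommGroup M]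
    [Module Rᵐᵒᵖ M] (d : M → M) : Prop :=
  (∀ x y : M, d (x + y) = d x + d y) ∧
    ∀ (x : M) (r : R), d (op r • x) = op r • d x + op (δ r) • x

/-- A right Gabriel filter is differential if for every `I` in the filter there is `J` in
the filter with `δ(J) ⊆ I` for every derivation `δ`. -/
def IsDifferentialRight {R : Type*} [Ring R] (F : RightGabrielFilter R) : Prop :=
  ∀ I ∈ F.sets, ∃ J ∈ F.sets, ∀ δ : R → R, IsDerivation δ →
    ∀ x : Rᵐᵒᵖ, x ∈ J → op (δ (unop x)) ∈ I

/-- `q : R → Q` realizes the ring `Q` as the right ring of quotients of `R` with respect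
to the right Gabriel filter `F`.  The right `R`-module structure of `Q` is the one coming
from the ring structure via `q`, and `q` is a ring homomorphism which is a module of
quotients map. -/
structure IsRightRingOfQuotients {R : Type*} [Ring R] (F : RightGabrielFilter R)
    {Q : Type*} [Ring Q] [Module Rᵐᵒᵖ Q] (q : R →ₗ[Rᵐᵒᵖ] Q) : Prop where
  smul_def : ∀ (r : R) (y : Q), op r • y = y * q r
  map_mul : ∀ a b : R, q (a * b) = q a * q b
  map_one : q 1 = 1
  quotients : IsModuleOfQuotients F.sets q

universe u

/-- A right ideal of `R` (encoded as a left ideal of `Rᵐᵒᵖ`) is dense if for all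
`x y : R` with `x ≠ 0` there is `r : R` with `y * r ∈ I` and `x * r ≠ 0`.  The dense
right ideals form the Gabriel filter of the Lambek torsion theory. -/
def IsDenseRightIdeal {R : Type*} [Ring R] (I : Ideal Rᵐᵒᵖ) : Prop :=
  ∀ x y : R, x ≠ 0 → ∃ r : R, op r * op y ∈ I ∧ x * r ≠ 0

/-- Data exhibiting a right Gabriel filter `F` as a perfect filter: a ring `S` which is a
right ring of quotients of `R` with respect to `F` via `f : R → S`, such that `F` is
exactly the family of right ideals `J` with `f(J)S = S`. -/
structure PerfectRingData {R : Type u} [Ring R] (F : RightGabrielFilter R) :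
    Type (u + 1) where
  S : Type u
  [ringS : Ring S]
  [modS : Module Rᵐᵒᵖ S]
  f : R →ₗ[Rᵐᵒᵖ] S
  filter_eq : F.sets =
    {J : Ideal Rᵐᵒᵖ |
      Submodule.span Sᵐᵒᵖ ((fun j : Rᵐᵒᵖ => f (unop j)) '' (J : Set Rᵐᵒᵖ)) = ⊤}
  isROQ : IsRightRingOfQuotients F f

/-- A right Gabriel filter is perfect if its ring of quotients makes it a perfect right
localization. -/
def IsPerfectFilter {R : Type u} [Ring R] (F : RightGabrielFilter R) : Prop :=
  Nonempty (PerfectRingData F)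

/-- An ideal is essential if it intersects every nonzero ideal nontrivially. -/
def IsEssentialIdeal {S : Type*} [Ring S] (I : Ideal S) : Prop :=
  ∀ J : Ideal S, I ⊓ J = ⊥ → J = ⊥

/-- The singular set of a right `R`-module: the elements whose annihilator is an
essential right ideal.  A module is nonsingular when this is `{0}`. -/
def rightSingularSet (R : Type*) [Ring R] (M : Type*) [AddCommGroup M]
    [Module Rᵐᵒᵖ M] : Set M :=
  {x : M | IsEssentialIdeal (LinearMap.ker (LinearMap.toSpanSingleton Rᵐᵒᵖ M x))}


/-! ### Auxiliary development -/

section DerivAux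

variable {R : Type*} [Ring R]

lemma IsDerivation.map_sub' {δ : R → R} (hδ : IsDerivation δ) (a b : R) :
    δ (a - b) = δ a - δ b :=
  (AddMonoidHom.mk' δ hδ.1).map_sub a b

lemma IsDerivation.map_zero' {δ : R → R} (hδ : IsDerivation δ) : δ 0 = 0 :=
  (AddMonoidHom.mk' δ hδ.1).map_zero

variable (F : RightGabrielFilter R)

lemma torsionSet_mem_of {M : Type*} [AddCommGroup M] [Module Rᵐᵒᵖ M] {x : M}
    {I : Ideal Rᵐᵒᵖ} (hI : I ∈ F.sets) (h : ∀ s ∈ I, s • x = 0) :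
    x ∈ torsionSet F.sets M :=
  F.mono hI fun s hs => LinearMap.mem_ker.mpr (h s hs)

lemma torsion_zero {M : Type*} [AddCommGroup M] [Module Rᵐᵒᵖ M] :
    (0 : M) ∈ torsionSet F.sets M :=
  torsionSet_mem_of F F.top_mem fun s _ => smul_zero s

lemma torsion_smul {M : Type*} [AddCommGroup M] [Module Rᵐᵒᵖ M] {x : M}
    (hx : x ∈ torsionSet F.sets M) (c : Rᵐᵒᵖ) : c • x ∈ torsionSet F.sets M := by
  refine F.mono (F.quot_mem hx c) fun t ht => ?_
  rw [Submodule.mem_comap, LinearMap.toSpanSingleton_apply, smul_eq_mul,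
    LinearMap.mem_ker, LinearMap.toSpanSingleton_apply] at ht
  rw [LinearMap.mem_ker, LinearMap.toSpanSingleton_apply, ← mul_smul]
  exact ht

lemma torsion_sub {M : Type*} [AddCommGroup M] [Module Rᵐᵒᵖ M] {x y : M}
    (hx : x ∈ torsionSet F.sets M) (hy : y ∈ torsionSet F.sets M) :
    x - y ∈ torsionSet F.sets M := by
  refine F.mono (F.inf_mem hx hy) fun t ht => ?_
  obtain ⟨h1, h2⟩ := Submodule.mem_inf.mp ht
  rw [LinearMap.mem_ker, LinearMap.toSpanSingleton_apply] at h1 h2 ⊢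
  rw [smul_sub, h1, h2, sub_self]

lemma torsion_add {M : Type*} [AddCommGroup M] [Module Rᵐᵒᵖ M] {x y : M}
    (hx : x ∈ torsionSet F.sets M) (hy : y ∈ torsionSet F.sets M) :
    x + y ∈ torsionSet F.sets M := by
  have := torsion_sub F hx (torsion_sub F (torsion_zero F) hy)
  simpa using this

lemma torsion_neg {M : Type*} [AddCommGroup M] [Module Rᵐᵒᵖ M] {x : M}
    (hx : x ∈ torsionSet F.sets M) : -x ∈ torsionSet F.sets M := by
  have := torsion_sub F (torsion_zero F) hx
  simpa using this

/-- The torsion set as a submodule. -/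
def torsionSubmodule (M : Type*) [AddCommGroup M] [Module Rᵐᵒᵖ M] :
    Submodule Rᵐᵒᵖ M where
  carrier := torsionSet F.sets M
  add_mem' hx hy := torsion_add F hx hy
  zero_mem' := torsion_zero F
  smul_mem' c _ hx := torsion_smul F hx c

/-- The "transitivity" of torsion: if `s • x` is torsion for all `s` in a filter ideal,
then `x` is torsion. -/
lemma torsion_of_smul_torsion {M : Type*} [AddCommGroup M] [Module Rᵐᵒᵖ M] {x : M}
    {I : Ideal Rᵐᵒᵖ} (hI : I ∈ F.sets)
    (h : ∀ s ∈ I, s • x ∈ torsionSet F.sets M) : x ∈ torsionSet F.sets M := by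
  refine F.trans hI fun s hs => ?_
  refine F.mono (h s hs) fun t ht => ?_
  rw [LinearMap.mem_ker, LinearMap.toSpanSingleton_apply] at ht
  rw [Submodule.mem_comap, LinearMap.toSpanSingleton_apply, smul_eq_mul,
    LinearMap.mem_ker, LinearMap.toSpanSingleton_apply, mul_smul]
  exact ht

/-- The torsion set of `R` itself is invariant under any derivation
(Lomp–van den Berg). -/
lemma torsion_deriv {δ : R → R} (hδ : IsDerivation δ) {a : R}
    (ha : a ∈ torsionSet F.sets R) : δ a ∈ torsionSet F.sets R := by
  refine torsion_of_smul_torsion F ha fun s hs => ?_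
  rw [LinearMap.mem_ker, LinearMap.toSpanSingleton_apply] at hs
  -- hs : s • a = 0, i.e. a * unop s = 0
  have h0 : a * unop s = 0 := hs
  have hLeib := hδ.2 a (unop s)
  rw [h0, hδ.map_zero'] at hLeib
  have key : s • δ a = -(op (δ (unop s)) • a) := by
    show δ a * unop s = -(a * δ (unop s))
    exact eq_neg_of_add_eq_zero_left hLeib.symm
  rw [key]
  exact torsion_neg F (torsion_smul F ha _)

lemma essential_of_mem_faithful (hfa : torsionSet F.sets R = {0})
    {I : Ideal Rᵐᵒᵖ} (hI : I ∈ F.sets) : IsEssentialIdeal I := by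
  intro J hIJ
  rw [Submodule.eq_bot_iff]
  intro x hx
  have hxt : unop x ∈ torsionSet F.sets R := by
    refine torsionSet_mem_of F (F.quot_mem hI x) fun t ht => ?_
    rw [Submodule.mem_comap, LinearMap.toSpanSingleton_apply, smul_eq_mul] at ht
    have h2 : t * x ∈ J := by
      have := J.smul_mem t hx
      rwa [smul_eq_mul] at this
    have h0 : t * x = 0 := by
      have hm : t * x ∈ I ⊓ J := Submodule.mem_inf.mpr ⟨ht, h2⟩
      rw [hIJ] at hm
      exact (Submodule.mem_bot _).mp hm
    show t • unop x = 0
    calc t • unop x = unop x * unop t := rfl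
      _ = unop (t * x) := (unop_mul t x).symm
      _ = 0 := by rw [h0, unop_zero]
  rw [hfa] at hxt
  exact (unop_eq_zero_iff x).mp hxt

lemma essential_mono {I K : Ideal Rᵐᵒᵖ} (hI : IsEssentialIdeal I) (hIK : I ≤ K) :
    IsEssentialIdeal K := fun J hJ =>
  hI J (le_bot_iff.mp (hJ ▸ inf_le_inf_right J hIK))

end DerivAux

section GoldieAux

lemma mem_goldie {R : Type u} [Ring R] (FG : RightGabrielFilter R)
    (hFG : ∀ (M : Type u) [AddCommGroup M] [Module Rᵐᵒᵖ M],
      torsionSet FG.sets M = {0} ↔ rightSingularSet R M = {0})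
    {I : Ideal Rᵐᵒᵖ} (hI : IsEssentialIdeal I) : I ∈ FG.sets := by
  classical
  set N := (Rᵐᵒᵖ ⧸ I) with hN
  set T : Submodule Rᵐᵒᵖ N := torsionSubmodule FG N with hT
  set M := (N ⧸ T) with hM
  have hMfree : torsionSet FG.sets M = {0} := by
    ext x
    simp only [Set.mem_singleton_iff]
    constructor
    · intro hx
      obtain ⟨n, rfl⟩ := Submodule.Quotient.mk_surjective T x
      have hn : n ∈ torsionSet FG.sets N := by
        refine torsion_of_smul_torsion FG hx fun s hs => ?_
        rw [LinearMap.mem_ker, LinearMap.toSpanSingleton_apply,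
          ← Submodule.Quotient.mk_smul, Submodule.Quotient.mk_eq_zero] at hs
        exact hs
      exact (Submodule.Quotient.mk_eq_zero T).mpr hn
    · rintro rfl; exact torsion_zero FG
  have hsing := (hFG M).mp hMfree
  set x₀ : M := Submodule.Quotient.mk (Submodule.Quotient.mk (1 : Rᵐᵒᵖ)) with hx₀def
  have hx₀ : x₀ = 0 := by
    have hxs : x₀ ∈ rightSingularSet R M := by
      refine essential_mono hI fun s hs => ?_
      rw [LinearMap.mem_ker, LinearMap.toSpanSingleton_apply]
      show s • x₀ = 0
      rw [hx₀def, ← Submodule.Quotient.mk_smul, ← Submodule.Quotient.mk_smul,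
        smul_eq_mul, mul_one]
      rw [(Submodule.Quotient.mk_eq_zero I).mpr hs]
      exact (Submodule.Quotient.mk_eq_zero T).mpr (torsion_zero FG)
    rw [hsing] at hxs
    exact hxs
  have h1 : (Submodule.Quotient.mk (1 : Rᵐᵒᵖ) : N) ∈ T :=
    (Submodule.Quotient.mk_eq_zero T).mp hx₀
  have hann : LinearMap.ker
      (LinearMap.toSpanSingleton Rᵐᵒᵖ N (Submodule.Quotient.mk (1 : Rᵐᵒᵖ))) = I := by
    ext t
    rw [LinearMap.mem_ker, LinearMap.toSpanSingleton_apply,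
      ← Submodule.Quotient.mk_smul, smul_eq_mul, mul_one, Submodule.Quotient.mk_eq_zero]
  have h2 : (Submodule.Quotient.mk (1 : Rᵐᵒᵖ) : N) ∈ torsionSet FG.sets N := h1
  rw [torsionSet, Set.mem_setOf_eq, hann] at h2
  exact h2

lemma dense_faithful {R : Type*} [Ring R] (FL : RightGabrielFilter R)
    (hFL : FL.sets = {I : Ideal Rᵐᵒᵖ | IsDenseRightIdeal I}) :
    torsionSet FL.sets R = {0} := by
  ext x
  simp only [Set.mem_singleton_iff]
  constructor
  · intro hx
    by_contra hx0
    have hd : IsDenseRightIdeal (LinearMap.ker (LinearMap.toSpanSingleton Rᵐᵒᵖ R x)) := by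
      rw [torsionSet, Set.mem_setOf_eq, hFL] at hx
      exact hx
    obtain ⟨r, hr1, hr2⟩ := hd x 1 hx0
    apply hr2
    have h := LinearMap.mem_ker.mp hr1
    rw [LinearMap.toSpanSingleton_apply] at h
    calc x * r = (op r * op (1 : R)) • x := by
          show x * r = x * unop (op r * op (1 : R))
          rw [unop_mul, unop_op, unop_op, one_mul]
      _ = 0 := h
  · rintro rfl; exact torsion_zero FL

end GoldieAux

section ExtAux

variable {R : Type*} [Ring R]

/-- `q (b * w) = op w • q b` for a linear map out of `R` with its right-module
structure. -/
lemma q_op_smul {Q : Type*} [AddCommGroup Q] [Module Rᵐᵒᵖ Q] (q : R →ₗ[Rᵐᵒᵖ] Q)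
    (w b : R) : q (b * w) = op w • q b :=
  map_smul q (op w) b

variable (F : RightGabrielFilter R) {Q : Type*} [Ring Q] [Module Rᵐᵒᵖ Q]
  (q : R →ₗ[Rᵐᵒᵖ] Q)

lemma eq_of_loc (hq : IsRightRingOfQuotients F q) {I : Ideal Rᵐᵒᵖ} (hI : I ∈ F.sets)
    {z z' : Q} (h : ∀ s ∈ I, s • z = s • z') : z = z' := by
  have ht : z - z' ∈ torsionSet F.sets Q :=
    torsionSet_mem_of F hI fun s hs => by rw [smul_sub, h s hs, sub_self]
  rw [hq.quotients.torsionFree] at ht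
  exact sub_eq_zero.mp ht

lemma ker_delta (hq : IsRightRingOfQuotients F q) {δ : R → R} (hδ : IsDerivation δ)
    {a b : R} (h : q a = q b) : q (δ a) = q (δ b) := by
  have h1 : a - b ∈ torsionSet F.sets R := by
    rw [← hq.quotients.ker_eq]
    show a - b ∈ LinearMap.ker q
    rw [LinearMap.mem_ker, map_sub, h, sub_self]
  have h2 : δ a - δ b ∈ torsionSet F.sets R := by
    rw [← hδ.map_sub']
    exact torsion_deriv F hδ h1
  rw [← hq.quotients.ker_eq] at h2
  have h3 : q (δ a - δ b) = 0 := h2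
  rw [map_sub, sub_eq_zero] at h3
  exact h3

lemma mem_coker {y : Q} {s : Rᵐᵒᵖ}
    (hs : s ∈ Submodule.comap (LinearMap.toSpanSingleton Rᵐᵒᵖ Q y) (LinearMap.range q)) :
    ∃ a : R, s • y = q a := by
  rw [Submodule.mem_comap, LinearMap.toSpanSingleton_apply, LinearMap.mem_range] at hs
  obtain ⟨a, ha⟩ := hs
  exact ⟨a, ha.symm⟩

/-- The fundamental construction: the extension of a derivation `δ` to a right ring of
quotients exists, characterized by a strong pointwise identity. -/
lemma exists_strong (hq : IsRightRingOfQuotients F q) {δ : R → R} (hδ : IsDerivation δ)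
    (y : Q) :
    ∃ z : Q, ∀ (s : Rᵐᵒᵖ) (a : R), s • y = q a →
      s • z = q (δ a) - op (δ (unop s)) • y := by
  classical
  set I : Ideal Rᵐᵒᵖ :=
    Submodule.comap (LinearMap.toSpanSingleton Rᵐᵒᵖ Q y) (LinearMap.range q) with hIdef
  have hI : I ∈ F.sets := hq.quotients.coker_torsion y
  have hmem : ∀ s : Rᵐᵒᵖ, s ∈ I → ∃ a : R, q a = s • y := by
    intro s hs
    obtain ⟨a, ha⟩ := mem_coker q hs
    exact ⟨a, ha.symm⟩
  set Φ : Rᵐᵒᵖ → Q := fun s =>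
    if h : ∃ a : R, q a = s • y then q (δ h.choose) - op (δ (unop s)) • y else 0
    with hΦdef
  have hΦ : ∀ (s : Rᵐᵒᵖ) (a : R), q a = s • y →
      Φ s = q (δ a) - op (δ (unop s)) • y := by
    intro s a ha
    have hex : ∃ a : R, q a = s • y := ⟨a, ha⟩
    rw [hΦdef]
    simp only
    rw [dif_pos hex, ker_delta F q hq hδ (hex.choose_spec.trans ha.symm)]
  set f : ↥I →ₗ[Rᵐᵒᵖ] Q :=
    { toFun := fun s => Φ s.1
      map_add' := by
        rintro ⟨s, hs⟩ ⟨t, ht⟩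
        obtain ⟨a, ha⟩ := hmem s hs
        obtain ⟨b, hb⟩ := hmem t ht
        have hab : q (a + b) = (s + t) • y := by rw [map_add, ha, hb, add_smul]
        show Φ (s + t) = Φ s + Φ t
        rw [hΦ _ _ hab, hΦ _ _ ha, hΦ _ _ hb, hδ.1, map_add, unop_add, hδ.1, op_add,
          add_smul]
        abel
      map_smul' := by
        rintro c ⟨s, hs⟩
        obtain ⟨a, ha⟩ := hmem s hs
        have hca : q (a * unop c) = (c * s) • y := by
          calc q (a * unop c) = q (c • a) := rfl
            _ = c • q a := map_smul q c a
            _ = c • (s • y) := by rw [ha]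
            _ = (c * s) • y := (mul_smul c s y).symm
        simp only [RingHom.id_apply, SetLike.val_smul, smul_eq_mul]
        show Φ (c * s) = c • Φ s
        rw [hΦ _ _ hca, hΦ _ _ ha]
        rw [hδ.2, unop_mul, hδ.2, map_add, q_op_smul, q_op_smul, op_add, op_mul, op_mul,
          op_unop, add_smul, mul_smul, mul_smul, op_unop, smul_sub]
        rw [← ha]
        abel }
  obtain ⟨g, hg⟩ := hq.quotients.closed I hI f
  refine ⟨g 1, ?_⟩
  intro s a hsy
  have hImem := F.quot_mem hI s
  have key : ∀ t ∈ Submodule.comap (LinearMap.toSpanSingleton Rᵐᵒᵖ Rᵐᵒᵖ s) I,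
      t • (s • g 1 - (q (δ a) - op (δ (unop s)) • y)) = 0 := by
    intro t ht
    rw [Submodule.mem_comap, LinearMap.toSpanSingleton_apply, smul_eq_mul] at ht
    have htsy : q (a * unop t) = (t * s) • y := by
      rw [mul_smul, hsy, q_op_smul, op_unop]
    have hgz : (t * s) • g 1 = Φ (t * s) := by
      have h1 : (t * s) • g 1 = g ((t * s) • 1) := (map_smul g (t * s) 1).symm
      rw [h1, smul_eq_mul, mul_one]
      exact hg ⟨t * s, ht⟩
    rw [smul_sub, smul_sub, ← mul_smul, hgz, hΦ _ _ htsy]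
    rw [hδ.2, unop_mul, hδ.2, map_add, q_op_smul, q_op_smul, op_add, op_mul, op_mul,
      op_unop, add_smul, mul_smul, mul_smul, op_unop, hsy]
    abel
  have hw : s • g 1 - (q (δ a) - op (δ (unop s)) • y) ∈ torsionSet F.sets Q :=
    torsionSet_mem_of F hImem key
  rw [hq.quotients.torsionFree] at hw
  exact sub_eq_zero.mp hw

variable {δ : R → R}

section Props

variable (hδ : IsDerivation δ) (hq : IsRightRingOfQuotients F q) (d : Q → Q)
  (hd : ∀ (y : Q) (s : Rᵐᵒᵖ) (a : R), s • y = q a →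
    s • d y = q (δ a) - op (δ (unop s)) • y)

include hδ hq hd

lemma ext_add (y y' : Q) : d (y + y') = d y + d y' := by
  apply eq_of_loc F q hq
    (F.inf_mem (hq.quotients.coker_torsion y) (hq.quotients.coker_torsion y'))
  intro s hs
  obtain ⟨h1, h2⟩ := Submodule.mem_inf.mp hs
  obtain ⟨a, ha⟩ := mem_coker q h1
  obtain ⟨b, hb⟩ := mem_coker q h2
  have hab : s • (y + y') = q (a + b) := by rw [smul_add, ha, hb, map_add]
  rw [hd _ _ _ hab, smul_add s (d y) (d y'), hd _ _ _ ha, hd _ _ _ hb, hδ.1, map_add,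
    smul_add]
  abel

lemma ext_comm (r : R) : d (q r) = q (δ r) := by
  apply eq_of_loc F q hq F.top_mem
  intro s _
  have h1 : s • q r = q (r * unop s) := by rw [q_op_smul, op_unop]
  rw [hd _ _ _ h1, hδ.2, map_add, q_op_smul, q_op_smul, op_unop]
  abel

lemma ext_mul (y y' : Q) : d (y * y') = d y * y' + y * d y' := by
  have sd : ∀ (s : Rᵐᵒᵖ) (u : Q), s • u = u * q (unop s) := by
    intro s u
    have := hq.smul_def (unop s) u
    rwa [op_unop] at this
  apply eq_of_loc F q hq
    (F.inf_mem (hq.quotients.coker_torsion (y * y')) (hq.quotients.coker_torsion y'))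
  intro s hs
  obtain ⟨h1, h2⟩ := Submodule.mem_inf.mp hs
  obtain ⟨b, hb⟩ := mem_coker q h1
  obtain ⟨a', ha'⟩ := mem_coker q h2
  have hmulsmul : ∀ (u v : Q), s • (u * v) = u * (s • v) := by
    intro u v
    rw [sd, sd, mul_assoc]
  have hyb : op a' • y = q b := by
    rw [hq.smul_def, ← ha', ← hmulsmul, hb]
  have hmain := hd y (op a') b hyb
  rw [unop_op] at hmain
  have h3 : s • (d y * y') = op a' • d y := by
    rw [hmulsmul, ha', ← hq.smul_def]
  have h4 : s • (y * d y') = op (δ a') • y - op (δ (unop s)) • (y * y') := by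
    rw [hmulsmul, hd _ _ _ ha', mul_sub, ← hq.smul_def]
    congr 1
    rw [hq.smul_def _ (y * y'), hq.smul_def _ y', mul_assoc]
  rw [hd _ _ _ hb, smul_add, h3, h4, hmain]
  abel

end Props

lemma ext_compat (F₁ F₂ : RightGabrielFilter R) (hsub : F₁.sets ⊆ F₂.sets)
    {Q₁ Q₂ : Type*} [Ring Q₁] [Module Rᵐᵒᵖ Q₁] [Ring Q₂] [Module Rᵐᵒᵖ Q₂]
    (q₁ : R →ₗ[Rᵐᵒᵖ] Q₁) (q₂ : R →ₗ[Rᵐᵒᵖ] Q₂)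
    (hq₁ : IsRightRingOfQuotients F₁ q₁) (hq₂ : IsRightRingOfQuotients F₂ q₂)
    (p : Q₁ →ₗ[Rᵐᵒᵖ] Q₂) (hp : ∀ r : R, p (q₁ r) = q₂ r)
    (d₁ : Q₁ → Q₁) (d₂ : Q₂ → Q₂)
    (hd₁ : ∀ (y : Q₁) (s : Rᵐᵒᵖ) (a : R), s • y = q₁ a →
      s • d₁ y = q₁ (δ a) - op (δ (unop s)) • y)
    (hd₂ : ∀ (y : Q₂) (s : Rᵐᵒᵖ) (a : R), s • y = q₂ a →
      s • d₂ y = q₂ (δ a) - op (δ (unop s)) • y)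
    (y : Q₁) : d₂ (p y) = p (d₁ y) := by
  apply eq_of_loc F₂ q₂ hq₂ (hsub (hq₁.quotients.coker_torsion y))
  intro s hs
  obtain ⟨a, ha⟩ := mem_coker q₁ hs
  have h1 : s • p y = q₂ a := by rw [← map_smul, ha, hp]
  have h2 : s • p (d₁ y) = p (s • d₁ y) := (map_smul p s (d₁ y)).symm
  rw [hd₂ _ _ _ h1, h2, hd₁ _ _ _ ha, map_sub, map_smul, hp]

end ExtAux

/-- Let `δ` be a derivation on `R`.  The extensions of `δ` to the
maximal right ring of quotients `Q_max(R)` (Lambek torsion theory, filter of dense right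
ideals) and to the right ring of quotients `Q_Gold(R)` with respect to the Goldie torsion
theory (the hereditary torsion theory whose torsion-free class is the class of
nonsingular right modules) agree.  Moreover, the extension of `δ` to the right ring of
quotients with respect to any hereditary and faithful torsion theory agrees with the
extension of `δ` to `Q_Gold(R)`. -/
theorem Goldie_extension_agrees {R : Type u} [Ring R]
    (δ : R → R) (hδ : IsDerivation δ)
    (FL : RightGabrielFilter R) (hFL : FL.sets = {I : Ideal Rᵐᵒᵖ | IsDenseRightIdeal I})
    (FG : RightGabrielFilter R)
    (hFG : ∀ (M : Type u) [AddCommGroup M] [Module Rᵐᵒᵖ M],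
      torsionSet FG.sets M = {0} ↔ rightSingularSet R M = {0})
    {QM QG : Type u} [Ring QM] [Module Rᵐᵒᵖ QM] [Ring QG] [Module Rᵐᵒᵖ QG]
    (qM : R →ₗ[Rᵐᵒᵖ] QM) (qG : R →ₗ[Rᵐᵒᵖ] QG)
    (hqM : IsRightRingOfQuotients FL qM) (hqG : IsRightRingOfQuotients FG qG)
    (qMG : QM →ₗ[Rᵐᵒᵖ] QG) (hqMG : ∀ r : R, qMG (qM r) = qG r) :
    (∃ (δM : QM → QM) (δG : QG → QG), IsDerivation δM ∧ IsDerivation δG ∧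
      (∀ r : R, δM (qM r) = qM (δ r)) ∧ (∀ r : R, δG (qG r) = qG (δ r)) ∧
      (∀ y : QM, δG (qMG y) = qMG (δM y))) ∧
    (∀ F : RightGabrielFilter R, torsionSet F.sets R = {0} →
      ∀ {Q : Type u} [Ring Q] [Module Rᵐᵒᵖ Q] (q : R →ₗ[Rᵐᵒᵖ] Q),
        IsRightRingOfQuotients F q →
        ∀ p : Q →ₗ[Rᵐᵒᵖ] QG, (∀ r : R, p (q r) = qG r) →
          ∃ (δ₁ : Q → Q) (δG : QG → QG), IsDerivation δ₁ ∧ IsDerivation δG ∧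
            (∀ r : R, δ₁ (q r) = q (δ r)) ∧ (∀ r : R, δG (qG r) = qG (δ r)) ∧
            (∀ y : Q, δG (p y) = p (δ₁ y))) := by
  classical
  have hsubL : FL.sets ⊆ FG.sets := fun I hI =>
    mem_goldie FG hFG (essential_of_mem_faithful FL (dense_faithful FL hFL) hI)
  choose dG hdG using fun y => exists_strong FG qG hqG hδ y
  choose dM hdM using fun y => exists_strong FL qM hqM hδ y
  constructor
  · exact ⟨dM, dG,
      ⟨ext_add FL qM hδ hqM dM hdM, ext_mul FL qM hδ hqM dM hdM⟩,
      ⟨ext_add FG qG hδ hqG dG hdG, ext_mul FG qG hδ hqG dG hdG⟩,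
      ext_comm FL qM hδ hqM dM hdM, ext_comm FG qG hδ hqG dG hdG,
      ext_compat FL FG hsubL qM qG hqM hqG qMG hqMG dM dG hdM hdG⟩
  · intro F hFf Q _ _ q hq p hp
    have hsub : F.sets ⊆ FG.sets := fun I hI =>
      mem_goldie FG hFG (essential_of_mem_faithful F hFf hI)
    choose d1 hd1 using fun y => exists_strong F q hq hδ y
    exact ⟨d1, dG,
      ⟨ext_add F q hδ hq d1 hd1, ext_mul F q hδ hq d1 hd1⟩,
      ⟨ext_add FG qG hδ hqG dG hdG, ext_mul FG qG hδ hqG dG hdG⟩,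
      ext_comm F q hδ hq d1 hd1, ext_comm FG qG hδ hqG dG hdG,
      ext_compat F FG hsub q qG hq hqG p hp d1 dG hd1 hdG⟩
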